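/- arXiv:2410.13534 — 7 statements merged into one kernel-verified Lean document; each statement's English description precedes it below -/
import Mathlib

section
/- Let (E^•, E^(1), E^(2)) be a bifiltered cochain complex of A-modules which is strictly exact, i.e. the complexes E^•, and E^(1)_{k₁} ∩ E^(2)_{k₂} (as subcomplexes, for all k₁,k₂ ∈ ℤ), and each E^(i)_k, are all exact. Then for all k₁, k₂ the double graded complex gr^{P^(1)}_{k₁} gr^{P^(2)}_{k₂} E^• = (E^(1)_{k₁} ∩ E^(2)_{k₂}) / ((E^(1)_{k₁−1} ∩ E^(2)_{k₂}) + (E^(1)_{k₁} ∩ E^(2)_{k₂−1})) is an exact complex. -/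
/-- Proposition 2.7: if a bifiltered cochain complex is strictly exact
(the underlying complex, each filtration piece and every intersection
`E^(1)_{k₁} ∩ E^(2)_{k₂}` is exact), then each double graded complex
`gr_{k₁} gr_{k₂} E^•` is exact (stated elementwise for quotient complexes). -/
theorem stmt3 {A : Type*} [CommRing A] (E : ℤ → Type*)
    [∀ q, AddCommGroup (E q)] [∀ q, Module A (E q)]
    (d : ∀ q, E q →ₗ[A] E (q + 1))
    (hdd : ∀ q, (d (q + 1)).comp (d q) = 0)
    (Fil : Fin 2 → ℤ → ∀ q : ℤ, Submodule A (E q))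
    (hmono : ∀ i q, Monotone (fun k => Fil i k q))
    (hd : ∀ i k q, (Fil i k q).map (d q) ≤ Fil i k (q + 1))
    -- strict exactness: the underlying complex is exact
    (hex : ∀ q (x : E (q + 1)), d (q + 1) x = 0 → ∃ y, d q y = x)
    -- each single filtration piece is exact
    (hexs : ∀ (i : Fin 2) (k : ℤ) (q : ℤ) (x : E (q + 1)),
      x ∈ Fil i k (q + 1) → d (q + 1) x = 0 → ∃ y ∈ Fil i k q, d q y = x)
    -- each intersection subcomplex is exact
    (hexi : ∀ (k₁ k₂ : ℤ) (q : ℤ) (x : E (q + 1)),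
      x ∈ Fil 0 k₁ (q + 1) ⊓ Fil 1 k₂ (q + 1) → d (q + 1) x = 0 →
      ∃ y ∈ Fil 0 k₁ q ⊓ Fil 1 k₂ q, d q y = x) :
    -- conclusion: the double graded complex is exact
    ∀ (k₁ k₂ : ℤ) (q : ℤ) (x : E (q + 1)),
      x ∈ Fil 0 k₁ (q + 1) ⊓ Fil 1 k₂ (q + 1) →
      d (q + 1) x ∈
        (Fil 0 (k₁ - 1) (q + 1 + 1) ⊓ Fil 1 k₂ (q + 1 + 1)) ⊔
          (Fil 0 k₁ (q + 1 + 1) ⊓ Fil 1 (k₂ - 1) (q + 1 + 1)) →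
      ∃ y ∈ Fil 0 k₁ q ⊓ Fil 1 k₂ q,
        x - d q y ∈
          (Fil 0 (k₁ - 1) (q + 1) ⊓ Fil 1 k₂ (q + 1)) ⊔
            (Fil 0 k₁ (q + 1) ⊓ Fil 1 (k₂ - 1) (q + 1)) := by
  intro k₁ k₂ q x hx hdx
  obtain ⟨a, ha, b, hb, hab⟩ := Submodule.mem_sup.mp hdx
  have hda : d (q+1+1) a = - d (q+1+1) b := by
    have h0 : d (q+1+1) (d (q+1) x) = 0 := LinearMap.congr_fun (hdd (q+1)) x
    rw [← hab, map_add] at h0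
    exact eq_neg_of_add_eq_zero_left h0
  have hdamem : d (q+1+1) a ∈ Fil 0 (k₁-1) (q+1+1+1) ⊓ Fil 1 (k₂-1) (q+1+1+1) := by
    constructor
    · exact hd 0 (k₁-1) (q+1+1) ⟨a, ha.1, rfl⟩
    · rw [hda]; exact neg_mem (hd 1 (k₂-1) (q+1+1) ⟨b, hb.2, rfl⟩)
  have hdda : d (q+1+1+1) (d (q+1+1) a) = 0 := LinearMap.congr_fun (hdd (q+1+1)) a
  obtain ⟨c, hc, hdc⟩ := hexi (k₁-1) (k₂-1) (q+1+1) (d (q+1+1) a) hdamem hdda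
  have hacmem : a - c ∈ Fil 0 (k₁-1) (q+1+1) ⊓ Fil 1 k₂ (q+1+1) :=
    ⟨sub_mem ha.1 hc.1,
     sub_mem ha.2 (hmono 1 (q+1+1) (by linarith : k₂-1 ≤ k₂) hc.2)⟩
  have hdac : d (q+1+1) (a - c) = 0 := by rw [map_sub, hdc, sub_self]
  obtain ⟨u, hu, hdu⟩ := hexi (k₁-1) k₂ (q+1) (a - c) hacmem hdac
  have hbcmem : b + c ∈ Fil 0 k₁ (q+1+1) ⊓ Fil 1 (k₂-1) (q+1+1) :=
    ⟨add_mem hb.1 (hmono 0 (q+1+1) (by linarith : k₁-1 ≤ k₁) hc.1),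
     add_mem hb.2 hc.2⟩
  have hdbc : d (q+1+1) (b + c) = 0 := by
    rw [map_add, hdc, hda]; abel
  obtain ⟨v, hv, hdv⟩ := hexi k₁ (k₂-1) (q+1) (b + c) hbcmem hdbc
  have hxmem : x - u - v ∈ Fil 0 k₁ (q+1) ⊓ Fil 1 k₂ (q+1) :=
    ⟨sub_mem (sub_mem hx.1 (hmono 0 (q+1) (by linarith : k₁-1 ≤ k₁) hu.1)) hv.1,
     sub_mem (sub_mem hx.2 hu.2) (hmono 1 (q+1) (by linarith : k₂-1 ≤ k₂) hv.2)⟩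
  have hdx0 : d (q+1) (x - u - v) = 0 := by
    rw [map_sub, map_sub, hdu, hdv, ← hab]; abel
  obtain ⟨y, hy, hdy⟩ := hexi k₁ k₂ q (x - u - v) hxmem hdx0
  refine ⟨y, hy, ?_⟩
  have heq : x - d q y = u + v := by rw [hdy]; abel
  rw [heq]
  exact Submodule.add_mem_sup hu hv
end

section
/- Let (F, {F^(i)}_{i=1}^n) be an A-module with n filtrations and define the special module Π(F) := F × Π_{l₁∈ℤ} F^(1)_{l₁} × ⋯ × Π_{lₙ∈ℤ} F^(n)_{lₙ}, with i-th filtration (Π(F))^(i)_k := F × Π_{m<i} Π_{lₘ} F^(m)_{lₘ} × Π_{lᵢ ≤ k} F^(i)_{lᵢ} × Π_{m>i} Π_{lₘ} F^(m)_{lₘ}. Then for every A-module (E, {E^(i)}) with n filtrations there is a natural bijection Hom_{MFⁿ(A)}((E,{E^(i)}), Π(F)) ≅ Hom_A(E, F) × Π_{i=1}^n Π_{k∈ℤ} Hom_A(E/E^(i)_{k−1}, F^(i)_k), where Hom_{MFⁿ(A)} denotes morphisms compatible with all n filtrations. -/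
universe u

/-- Proposition 3.1: the Hom formula for the special module
`Π(F) = F × Π_{i} Π_{l} F^(i)_l`, whose `i`-th filtration in degree `k` consists
of elements whose `(i, l)`-components vanish for `l > k`. Morphisms of `n`-filtered
modules `(E, {E^(i)}) → Π(F)` correspond bijectively to elements of
`Hom_A(E, F) × Π_i Π_k Hom_A(E/E^(i)_{k-1}, F^(i)_k)`. -/
theorem stmt5 {A : Type u} [CommRing A] {E F : Type u}
    [AddCommGroup E] [Module A E] [AddCommGroup F] [Module A F]
    (n : ℕ) (EF : Fin n → ℤ → Submodule A E) (FF : Fin n → ℤ → Submodule A F)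
    (hE : ∀ i, Monotone (EF i)) (hF : ∀ i, Monotone (FF i)) :
    Nonempty (
      {f : E →ₗ[A] (F × (∀ i : Fin n, ∀ l : ℤ, ↥(FF i l))) //
        ∀ i k, (EF i k).map f ≤
          ⨅ (l : ℤ), ⨅ (_ : k < l),
            LinearMap.ker ((LinearMap.proj l).comp ((LinearMap.proj i).comp
              (LinearMap.snd A F (∀ i : Fin n, ∀ l : ℤ, ↥(FF i l)))))} ≃
      ((E →ₗ[A] F) × (∀ i : Fin n, ∀ k : ℤ, (E ⧸ EF i (k - 1)) →ₗ[A] ↥(FF i k)))) := by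
  constructor
  refine
    { toFun := fun f =>
        ((LinearMap.fst A F _).comp f.1,
         fun i k => Submodule.liftQ (EF i (k-1))
            (((LinearMap.proj k).comp ((LinearMap.proj i).comp
              (LinearMap.snd A F _))).comp f.1) ?_)
      invFun := fun g =>
        ⟨LinearMap.prod g.1 (LinearMap.pi fun i => LinearMap.pi fun l =>
           (g.2 i l).comp (Submodule.mkQ (EF i (l-1)))), ?_⟩
      left_inv := ?_
      right_inv := ?_ }
  · intro x hx
    have h := f.2 i (k-1) (Submodule.mem_map_of_mem hx)
    simp only [Submodule.mem_iInf, LinearMap.mem_ker] at h ⊢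
    exact h k (by omega)
  · intro i k x hx
    simp only [Submodule.mem_map] at hx
    obtain ⟨y, hy, rfl⟩ := hx
    simp only [Submodule.mem_iInf, LinearMap.mem_ker]
    intro l hl
    have hz : (Submodule.mkQ (EF i (l-1))) y = 0 := by
      simpa [Submodule.Quotient.mk_eq_zero] using hE i (by omega : k ≤ l-1) hy
    simp [LinearMap.prod_apply, LinearMap.pi_apply, hz]
  · intro f
    apply Subtype.ext
    apply LinearMap.ext
    intro x
    rfl
  · intro g
    refine Prod.ext rfl ?_
    funext i k
    apply Submodule.linearMap_qext
    apply LinearMap.ext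
    intro x
    simp [LinearMap.prod_apply, LinearMap.pi_apply]
end

section
/- Let (E, {E^(i)}_{i=1}^n) be an A-module with n filtrations. Then the canonical map E → Π(F) (with F = E), given by the evaluation E → E in the first coordinate and the projections E → E/E^(i)_{l−1} followed by injections into injective modules I^(i)_l in the other coordinates, where E ↪ I and E/E^(i)_{l−1} ↪ I^(i)_l are embeddings into injective A-modules, is an injective morphism of n-filtered modules which is strict: for all i, k, the preimage of the k-th filtration piece of J := I × Π_{i,l} I^(i)_l (with J^(i)_k := I × Π_{m<i}Π_l I^(m)_l × Π_{l≤k} I^(i)_l × Π_{m>i}Π_l I^(m)_l) equals E^(i)_k; that is, Im(E → J) ∩ J^(i)_k = image of E^(i)_k. -/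
universe u

/-- Proposition 3.5: the canonical morphism from `(E, {E^(i)})` into the special
module `J = I × Π_{i,l} I^(i)_l` built from embeddings `E ↪ I` and
`E/E^(i)_{l-1} ↪ I^(i)_l` into injective modules is an injective morphism of
`n`-filtered modules which is strict: `Im(E → J) ∩ J^(i)_k` is the image of
`E^(i)_k` for all `i, k`. -/
theorem stmt6 {A : Type u} [CommRing A] {E I : Type u}
    [AddCommGroup E] [Module A E] [AddCommGroup I] [Module A I] (n : ℕ)
    (EF : Fin n → ℤ → Submodule A E) (hE : ∀ i, Monotone (EF i))
    (I' : Fin n → ℤ → Type u) [∀ i l, AddCommGroup (I' i l)] [∀ i l, Module A (I' i l)]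
    (hInj : Module.Injective A I) (hInj' : ∀ i l, Module.Injective A (I' i l))
    (e : E →ₗ[A] I) (he : Function.Injective e)
    (e' : ∀ i l, (E ⧸ EF i (l - 1)) →ₗ[A] I' i l)
    (he' : ∀ i l, Function.Injective (e' i l)) :
    Function.Injective
      (LinearMap.prod e
        (LinearMap.pi fun i => LinearMap.pi fun l => (e' i l).comp (EF i (l - 1)).mkQ)) ∧
    ∀ i k,
      LinearMap.range (LinearMap.prod e
          (LinearMap.pi fun i => LinearMap.pi fun l => (e' i l).comp (EF i (l - 1)).mkQ)) ⊓
        (⨅ (l : ℤ), ⨅ (_ : k < l),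
          LinearMap.ker ((LinearMap.proj l).comp ((LinearMap.proj i).comp
            (LinearMap.snd A I (∀ i : Fin n, ∀ l : ℤ, I' i l))))) =
      (EF i k).map (LinearMap.prod e
        (LinearMap.pi fun i => LinearMap.pi fun l => (e' i l).comp (EF i (l - 1)).mkQ)) := by
  constructor
  · intro x y hxy
    exact he (congrArg Prod.fst hxy)
  · intro i k
    ext z
    simp only [Submodule.mem_inf, LinearMap.mem_range, Submodule.mem_map,
      Submodule.mem_iInf, LinearMap.mem_ker, LinearMap.comp_apply,
      LinearMap.proj_apply, LinearMap.snd_apply]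
    constructor
    · rintro ⟨⟨x, rfl⟩, h⟩
      refine ⟨x, ?_, rfl⟩
      have hz := h (k + 1) (by omega)
      simp only [LinearMap.prod_apply, Pi.prod, LinearMap.pi_apply,
        LinearMap.comp_apply] at hz
      have hx : (EF i (k + 1 - 1)).mkQ x = 0 := by
        apply he' i (k + 1); simpa using hz
      rw [Submodule.mkQ_apply, Submodule.Quotient.mk_eq_zero] at hx
      simpa using hx
    · rintro ⟨x, hx, rfl⟩
      refine ⟨⟨x, rfl⟩, fun l hl => ?_⟩
      have hmem : x ∈ EF i (l - 1) := hE i (by omega) hx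
      have h0 : (Submodule.Quotient.mk x : E ⧸ EF i (l - 1)) = 0 :=
        (Submodule.Quotient.mk_eq_zero _).2 hmem
      simp [LinearMap.prod_apply, h0]
end

section
/- Let (E^•, P^(1), P^(2)) → (F^•, Q^(1), Q^(2)) be a morphism f of bifiltered cochain complexes of A-modules with both bifiltrations biregular (on each component, each filtration is finite: equal to 0 for small indices and to the whole module for large indices). If for all k₁, k₂ the induced map gr^{P^(1)}_{k₁} gr^{P^(2)}_{k₂} E^• → gr^{Q^(1)}_{k₁} gr^{Q^(2)}_{k₂} F^• is a quasi-isomorphism, then for all m₁, m₂ ∈ ℤ the induced map E^(1)_{m₁} ∩ E^(2)_{m₂} → F^(1)_{m₁} ∩ F^(2)_{m₂} is a quasi-isomorphism, and f : E^• → F^• is a quasi-isomorphism. -/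
section Bifil

variable {A : Type*} [CommRing A] {E F : ℤ → Type*}
  [∀ q, AddCommGroup (E q)] [∀ q, Module A (E q)]
  [∀ q, AddCommGroup (F q)] [∀ q, Module A (F q)]

/-- Elementwise surjectivity on relative cohomology in degree `q+1`
for the map of pairs `(GE, G'E) → (GF, G'F)`. -/
def BSurj (dE : ∀ q : ℤ, E q →ₗ[A] E (q + 1)) (dF : ∀ q : ℤ, F q →ₗ[A] F (q + 1))
    (f : ∀ q, E q →ₗ[A] F q)
    (GE G'E : ∀ q : ℤ, Submodule A (E q)) (GF G'F : ∀ q : ℤ, Submodule A (F q))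
    (q : ℤ) : Prop :=
  ∀ x : F (q + 1), x ∈ GF (q + 1) → dF (q + 1) x ∈ G'F (q + 1 + 1) →
    ∃ y ∈ GE (q + 1), dE (q + 1) y ∈ G'E (q + 1 + 1) ∧
      ∃ z ∈ GF q, f (q + 1) y - x - dF q z ∈ G'F (q + 1)

/-- Elementwise injectivity on relative cohomology in degree `q+1`
for the map of pairs `(GE, G'E) → (GF, G'F)`. -/
def BInj (dE : ∀ q : ℤ, E q →ₗ[A] E (q + 1)) (dF : ∀ q : ℤ, F q →ₗ[A] F (q + 1))
    (f : ∀ q, E q →ₗ[A] F q)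
    (GE G'E : ∀ q : ℤ, Submodule A (E q)) (GF G'F : ∀ q : ℤ, Submodule A (F q))
    (q : ℤ) : Prop :=
  ∀ y : E (q + 1), y ∈ GE (q + 1) → dE (q + 1) y ∈ G'E (q + 1 + 1) →
    (∃ z ∈ GF q, f (q + 1) y - dF q z ∈ G'F (q + 1)) →
    ∃ w ∈ GE q, y - dE q w ∈ G'E (q + 1)

variable {dE : ∀ q : ℤ, E q →ₗ[A] E (q + 1)} {dF : ∀ q : ℤ, F q →ₗ[A] F (q + 1)}
  {f : ∀ q, E q →ₗ[A] F q}

theorem bsurj_of_bot {GE G'E : ∀ q : ℤ, Submodule A (E q)} {GF G'F : ∀ q : ℤ, Submodule A (F q)}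
    {q : ℤ} (h : GF (q + 1) = ⊥) : BSurj dE dF f GE G'E GF G'F q := by
  intro x hx _
  rw [h, Submodule.mem_bot] at hx
  refine ⟨0, zero_mem _, ?_, 0, zero_mem _, ?_⟩
  · simpa using zero_mem (G'E (q + 1 + 1))
  · simpa [hx] using zero_mem (G'F (q + 1))

theorem binj_of_bot {GE G'E : ∀ q : ℤ, Submodule A (E q)} {GF G'F : ∀ q : ℤ, Submodule A (F q)}
    {q : ℤ} (h : GE (q + 1) = ⊥) : BInj dE dF f GE G'E GF G'F q := by
  intro y hy _ _
  rw [h, Submodule.mem_bot] at hy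
  refine ⟨0, zero_mem _, ?_⟩
  simpa [hy] using zero_mem (G'E (q + 1))

/-- The key "five lemma" step, surjectivity part: for `G'' ≤ G' ≤ G`,
relative surjectivity for `(G, G')`, together with relative surjectivity and
injectivity for `(G', G'')`, give relative surjectivity for `(G, G'')`. -/
theorem bsurj_glue
    (hddE : ∀ q, (dE (q + 1)).comp (dE q) = 0)
    (hddF : ∀ q, (dF (q + 1)).comp (dF q) = 0)
    (hfcomm : ∀ q, (f (q + 1)).comp (dE q) = (dF q).comp (f q))
    {GE G'E G''E : ∀ q : ℤ, Submodule A (E q)} {GF G'F G''F : ∀ q : ℤ, Submodule A (F q)}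
    (hE1 : ∀ q, G'E q ≤ GE q) (hF1 : ∀ q, G'F q ≤ GF q) (hF2 : ∀ q, G''F q ≤ G'F q)
    (hf' : ∀ q x, x ∈ G'E q → f q x ∈ G'F q)
    (hf'' : ∀ q x, x ∈ G''E q → f q x ∈ G''F q)
    (q : ℤ)
    (hC : BSurj dE dF f GE G'E GF G'F q)
    (hBI : BInj dE dF f G'E G''E G'F G''F (q + 1))
    (hBS : BSurj dE dF f G'E G''E G'F G''F q) :
    BSurj dE dF f GE G''E GF G''F q := by
  intro x hx hdx
  obtain ⟨y₁, hy₁, hdy₁, z₁, hz₁, hx'⟩ := hC x hx (hF2 _ hdx)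
  set x' := f (q + 1) y₁ - x - dF q z₁ with hx'def
  have h1 : f (q + 1 + 1) (dE (q + 1) y₁) = dF (q + 1) (f (q + 1) y₁) :=
    LinearMap.congr_fun (hfcomm (q + 1)) y₁
  have h2 : dF (q + 1) (dF q z₁) = 0 := LinearMap.congr_fun (hddF q) z₁
  have key : f (q + 1 + 1) (dE (q + 1) y₁) - dF (q + 1) x' = dF (q + 1) x := by
    rw [hx'def, map_sub, map_sub, h2, h1]; abel
  have hddy₁ : dE (q + 1 + 1) (dE (q + 1) y₁) = 0 := LinearMap.congr_fun (hddE (q + 1)) y₁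
  obtain ⟨w, hw, hw2⟩ := hBI (dE (q + 1) y₁) hdy₁
    (by rw [hddy₁]; exact zero_mem _) ⟨x', hx', by rw [key]; exact hdx⟩
  set x'' := x' - f (q + 1) w with hx''def
  have hx''mem : x'' ∈ G'F (q + 1) := sub_mem hx' (hf' _ _ hw)
  have hfw : f (q + 1 + 1) (dE (q + 1) w) = dF (q + 1) (f (q + 1) w) :=
    LinearMap.congr_fun (hfcomm (q + 1)) w
  have hdx'' : dF (q + 1) x'' ∈ G''F (q + 1 + 1) := by
    have : dF (q + 1) x'' =
        -(dF (q + 1) x) + f (q + 1 + 1) (dE (q + 1) y₁ - dE (q + 1) w) := by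
      simp only [hx''def, hx'def, map_sub, h2, hfw, h1]; abel
    rw [this]
    exact add_mem (neg_mem hdx) (hf'' _ _ hw2)
  obtain ⟨u, hu, hdu, v, hv, hfin⟩ := hBS x'' hx''mem hdx''
  refine ⟨y₁ - w - u, sub_mem (sub_mem hy₁ (hE1 _ hw)) (hE1 _ hu), ?_, z₁ - v,
    sub_mem hz₁ (hF1 _ hv), ?_⟩
  · rw [map_sub, map_sub]
    exact sub_mem hw2 hdu
  · have : f (q + 1) (y₁ - w - u) - x - dF q (z₁ - v) =
        -(f (q + 1) u - x'' - dF q v) := by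
      simp only [hx''def, hx'def, map_sub]; abel
    rw [this]
    exact neg_mem hfin

/-- The key "five lemma" step, injectivity part. -/
theorem binj_glue
    (hddE : ∀ q, (dE (q + 1)).comp (dE q) = 0)
    (hddF : ∀ q, (dF (q + 1)).comp (dF q) = 0)
    (hfcomm : ∀ q, (f (q + 1)).comp (dE q) = (dF q).comp (f q))
    {GE G'E G''E : ∀ q : ℤ, Submodule A (E q)} {GF G'F G''F : ∀ q : ℤ, Submodule A (F q)}
    (hE1 : ∀ q, G'E q ≤ GE q) (hE2 : ∀ q, G''E q ≤ G'E q) (hF2 : ∀ q, G''F q ≤ G'F q)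
    (hf : ∀ q x, x ∈ GE q → f q x ∈ GF q)
    (hf' : ∀ q x, x ∈ G'E q → f q x ∈ G'F q)
    (p q : ℤ) (hpq : p + 1 = q)
    (hCI : BInj dE dF f GE G'E GF G'F q)
    (hCS : BSurj dE dF f GE G'E GF G'F p)
    (hBI : BInj dE dF f G'E G''E G'F G''F q) :
    BInj dE dF f GE G''E GF G''F q := by
  subst hpq
  intro y hy hdy hex
  obtain ⟨z, hz, hfz⟩ := hex
  obtain ⟨w₁, hw₁, hy'⟩ := hCI y hy (hE2 _ hdy) ⟨z, hz, hF2 _ hfz⟩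
  set t' := z - f (p + 1) w₁ with ht'def
  have ht'mem : t' ∈ GF (p + 1) := sub_mem hz (hf _ _ hw₁)
  have hfw₁ : f (p + 1 + 1) (dE (p + 1) w₁) = dF (p + 1) (f (p + 1) w₁) :=
    LinearMap.congr_fun (hfcomm (p + 1)) w₁
  have hdt' : dF (p + 1) t' ∈ G'F (p + 1 + 1) := by
    have : dF (p + 1) t' =
        -(f (p + 1 + 1) y - dF (p + 1) z) + f (p + 1 + 1) (y - dE (p + 1) w₁) := by
      rw [ht'def, map_sub, map_sub, hfw₁]; abel
    rw [this]
    exact add_mem (neg_mem (hF2 _ hfz)) (hf' _ _ hy')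
  obtain ⟨y₀, hy₀, hdy₀, z₀, hz₀, ht⟩ := hCS t' ht'mem hdt'
  set t := f (p + 1) y₀ - t' - dF p z₀ with htdef
  set y'' := y - dE (p + 1) w₁ - dE (p + 1) y₀ with hy''def
  have hy''mem : y'' ∈ G'E (p + 1 + 1) := sub_mem hy' hdy₀
  have hddw₁ : dE (p + 1 + 1) (dE (p + 1) w₁) = 0 := LinearMap.congr_fun (hddE (p + 1)) w₁
  have hddy₀ : dE (p + 1 + 1) (dE (p + 1) y₀) = 0 := LinearMap.congr_fun (hddE (p + 1)) y₀
  have hdy'' : dE (p + 1 + 1) y'' ∈ G''E (p + 1 + 1 + 1) := by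
    have : dE (p + 1 + 1) y'' = dE (p + 1 + 1) y := by
      rw [hy''def, map_sub, map_sub, hddw₁, hddy₀]; abel
    rw [this]; exact hdy
  have hfy₀ : f (p + 1 + 1) (dE (p + 1) y₀) = dF (p + 1) (f (p + 1) y₀) :=
    LinearMap.congr_fun (hfcomm (p + 1)) y₀
  have hddz₀ : dF (p + 1) (dF p z₀) = 0 := LinearMap.congr_fun (hddF p) z₀
  have hkey : f (p + 1 + 1) y'' - dF (p + 1) (-t) = f (p + 1 + 1) y - dF (p + 1) z := by
    rw [hy''def, htdef, ht'def, map_sub, map_sub, map_neg, map_sub, map_sub, map_sub,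
      hfy₀, hfw₁, hddz₀]
    abel
  obtain ⟨w₂, hw₂, hfinal⟩ := hBI y'' hy''mem hdy''
    ⟨-t, neg_mem ht, by rw [hkey]; exact hfz⟩
  refine ⟨w₁ + y₀ + w₂, add_mem (add_mem hw₁ hy₀) (hE1 _ hw₂), ?_⟩
  have : y - dE (p + 1) (w₁ + y₀ + w₂) = y'' - dE (p + 1) w₂ := by
    rw [hy''def, map_add, map_add]; abel
  rw [this]
  exact hfinal

/-- Excision, surjectivity part: relative surjectivity for `(P, P ⊓ Q)` gives
relative surjectivity for `(Q ⊔ P, Q)`. -/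
theorem bsurj_excise
    {PE QE RE SE : ∀ q : ℤ, Submodule A (E q)} {PF QF RF SF : ∀ q : ℤ, Submodule A (F q)}
    (hRE : ∀ q, RE q = PE q ⊓ QE q) (hSE : ∀ q, SE q = QE q ⊔ PE q)
    (hRF : ∀ q, RF q = PF q ⊓ QF q) (hSF : ∀ q, SF q = QF q ⊔ PF q)
    (hPFd : ∀ q x, x ∈ PF q → dF q x ∈ PF (q + 1))
    (hQFd : ∀ q x, x ∈ QF q → dF q x ∈ QF (q + 1))
    (q : ℤ)
    (h : BSurj dE dF f PE RE PF RF q) :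
    BSurj dE dF f SE QE SF QF q := by
  intro x hx hdx
  rw [hSF, Submodule.mem_sup] at hx
  obtain ⟨r, hr, p, hp, hrp⟩ := hx
  have hdp : dF (q + 1) p ∈ RF (q + 1 + 1) := by
    rw [hRF]
    refine Submodule.mem_inf.2 ⟨hPFd _ _ hp, ?_⟩
    have : dF (q + 1) p = dF (q + 1) x - dF (q + 1) r := by rw [← hrp, map_add]; abel
    rw [this]
    exact sub_mem hdx (hQFd _ _ hr)
  obtain ⟨y, hy, hdy, z, hz, hcon⟩ := h p hp hdp
  refine ⟨y, by rw [hSE]; exact Submodule.mem_sup_right hy, ?_, z,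
    by rw [hSF]; exact Submodule.mem_sup_right hz, ?_⟩
  · rw [hRE] at hdy
    exact (Submodule.mem_inf.1 hdy).2
  · have : f (q + 1) y - x - dF q z = (f (q + 1) y - p - dF q z) - r := by
      rw [← hrp]; abel
    rw [this]
    rw [hRF] at hcon
    exact sub_mem (Submodule.mem_inf.1 hcon).2 hr

/-- Excision, injectivity part. -/
theorem binj_excise
    {PE QE RE SE : ∀ q : ℤ, Submodule A (E q)} {PF QF RF SF : ∀ q : ℤ, Submodule A (F q)}
    (hRE : ∀ q, RE q = PE q ⊓ QE q) (hSE : ∀ q, SE q = QE q ⊔ PE q)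
    (hRF : ∀ q, RF q = PF q ⊓ QF q) (hSF : ∀ q, SF q = QF q ⊔ PF q)
    (hPEd : ∀ q x, x ∈ PE q → dE q x ∈ PE (q + 1))
    (hQEd : ∀ q x, x ∈ QE q → dE q x ∈ QE (q + 1))
    (hPFd : ∀ q x, x ∈ PF q → dF q x ∈ PF (q + 1))
    (hQFd : ∀ q x, x ∈ QF q → dF q x ∈ QF (q + 1))
    (hfP : ∀ q x, x ∈ PE q → f q x ∈ PF q)
    (hfQ : ∀ q x, x ∈ QE q → f q x ∈ QF q)
    (q : ℤ)
    (h : BInj dE dF f PE RE PF RF q) :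
    BInj dE dF f SE QE SF QF q := by
  intro y hy hdy hex
  rw [hSE, Submodule.mem_sup] at hy
  obtain ⟨r, hr, p, hp, hrp⟩ := hy
  obtain ⟨z, hz, hfz⟩ := hex
  rw [hSF, Submodule.mem_sup] at hz
  obtain ⟨zq, hzq, zp, hzp, hzz⟩ := hz
  have hdp : dE (q + 1) p ∈ RE (q + 1 + 1) := by
    rw [hRE]
    refine Submodule.mem_inf.2 ⟨hPEd _ _ hp, ?_⟩
    have : dE (q + 1) p = dE (q + 1) y - dE (q + 1) r := by rw [← hrp, map_add]; abel
    rw [this]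
    exact sub_mem hdy (hQEd _ _ hr)
  have hfr : f (q + 1) r ∈ QF (q + 1) := hfQ _ _ hr
  have hkey : f (q + 1) p - dF q zp =
      (f (q + 1) y - dF q z) - f (q + 1) r + dF q zq := by
    rw [← hrp, ← hzz, map_add, map_add]; abel
  have hmem : f (q + 1) p - dF q zp ∈ RF (q + 1) := by
    rw [hRF]
    refine Submodule.mem_inf.2 ⟨sub_mem (hfP _ _ hp) (hPFd _ _ hzp), ?_⟩
    rw [hkey]
    exact add_mem (sub_mem hfz hfr) (hQFd _ _ hzq)
  obtain ⟨w, hw, hpw⟩ := h p hp hdp ⟨zp, hzp, hmem⟩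
  refine ⟨w, by rw [hSE]; exact Submodule.mem_sup_right hw, ?_⟩
  have : y - dE q w = r + (p - dE q w) := by rw [← hrp]; abel
  rw [this]
  rw [hRE] at hpw
  exact add_mem hr (Submodule.mem_inf.1 hpw).2

end Bifil

/-- Proposition 2.10 ((3) ⇒ (1)): for a morphism of biregular bifiltered
cochain complexes, if all the maps on double graded pieces are
quasi-isomorphisms, then each map `E^(1)_{m₁} ∩ E^(2)_{m₂} → F^(1)_{m₁} ∩ F^(2)_{m₂}`
is a quasi-isomorphism, and the underlying map is a quasi-isomorphism
(all stated elementwise in terms of cohomology classes). -/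
theorem stmt14 {A : Type*} [CommRing A]
    (E F : ℤ → Type*)
    [∀ q, AddCommGroup (E q)] [∀ q, Module A (E q)]
    [∀ q, AddCommGroup (F q)] [∀ q, Module A (F q)]
    (dE : ∀ q, E q →ₗ[A] E (q + 1)) (dF : ∀ q, F q →ₗ[A] F (q + 1))
    (hddE : ∀ q, (dE (q + 1)).comp (dE q) = 0)
    (hddF : ∀ q, (dF (q + 1)).comp (dF q) = 0)
    (E1 E2 : ℤ → ∀ q : ℤ, Submodule A (E q))
    (F1 F2 : ℤ → ∀ q : ℤ, Submodule A (F q))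
    (hE1mono : ∀ q, Monotone (fun k => E1 k q)) (hE2mono : ∀ q, Monotone (fun k => E2 k q))
    (hF1mono : ∀ q, Monotone (fun k => F1 k q)) (hF2mono : ∀ q, Monotone (fun k => F2 k q))
    (hE1d : ∀ k q, (E1 k q).map (dE q) ≤ E1 k (q + 1))
    (hE2d : ∀ k q, (E2 k q).map (dE q) ≤ E2 k (q + 1))
    (hF1d : ∀ k q, (F1 k q).map (dF q) ≤ F1 k (q + 1))
    (hF2d : ∀ k q, (F2 k q).map (dF q) ≤ F2 k (q + 1))
    -- biregularity: on each component every filtration is finite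
    (hbireg : ∀ q : ℤ, ∃ a b : ℤ,
      E1 a q = ⊥ ∧ E1 b q = ⊤ ∧ E2 a q = ⊥ ∧ E2 b q = ⊤ ∧
      F1 a q = ⊥ ∧ F1 b q = ⊤ ∧ F2 a q = ⊥ ∧ F2 b q = ⊤)
    (f : ∀ q, E q →ₗ[A] F q)
    (hfcomm : ∀ q, (f (q + 1)).comp (dE q) = (dF q).comp (f q))
    (hf1 : ∀ k q, (E1 k q).map (f q) ≤ F1 k q)
    (hf2 : ∀ k q, (E2 k q).map (f q) ≤ F2 k q)
    -- hypothesis: gr(f) is a quasi-isomorphism on every double graded piece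
    -- (surjectivity on cohomology)
    (hgrsurj : ∀ (k₁ k₂ : ℤ) (q : ℤ) (x : F (q + 1)),
      x ∈ F1 k₁ (q + 1) ⊓ F2 k₂ (q + 1) →
      dF (q + 1) x ∈ (F1 (k₁ - 1) (q + 1 + 1) ⊓ F2 k₂ (q + 1 + 1)) ⊔
        (F1 k₁ (q + 1 + 1) ⊓ F2 (k₂ - 1) (q + 1 + 1)) →
      ∃ y ∈ E1 k₁ (q + 1) ⊓ E2 k₂ (q + 1),
        dE (q + 1) y ∈ (E1 (k₁ - 1) (q + 1 + 1) ⊓ E2 k₂ (q + 1 + 1)) ⊔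
          (E1 k₁ (q + 1 + 1) ⊓ E2 (k₂ - 1) (q + 1 + 1)) ∧
        ∃ z ∈ F1 k₁ q ⊓ F2 k₂ q,
          f (q + 1) y - x - dF q z ∈ (F1 (k₁ - 1) (q + 1) ⊓ F2 k₂ (q + 1)) ⊔
            (F1 k₁ (q + 1) ⊓ F2 (k₂ - 1) (q + 1)))
    -- (injectivity on cohomology)
    (hgrinj : ∀ (k₁ k₂ : ℤ) (q : ℤ) (y : E (q + 1)),
      y ∈ E1 k₁ (q + 1) ⊓ E2 k₂ (q + 1) →
      dE (q + 1) y ∈ (E1 (k₁ - 1) (q + 1 + 1) ⊓ E2 k₂ (q + 1 + 1)) ⊔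
        (E1 k₁ (q + 1 + 1) ⊓ E2 (k₂ - 1) (q + 1 + 1)) →
      (∃ z ∈ F1 k₁ q ⊓ F2 k₂ q,
        f (q + 1) y - dF q z ∈ (F1 (k₁ - 1) (q + 1) ⊓ F2 k₂ (q + 1)) ⊔
          (F1 k₁ (q + 1) ⊓ F2 (k₂ - 1) (q + 1))) →
      ∃ w ∈ E1 k₁ q ⊓ E2 k₂ q,
        y - dE q w ∈ (E1 (k₁ - 1) (q + 1) ⊓ E2 k₂ (q + 1)) ⊔
          (E1 k₁ (q + 1) ⊓ E2 (k₂ - 1) (q + 1))) :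
    -- conclusion: f is a quasi-isomorphism on every intersection subcomplex ...
    (∀ (m₁ m₂ : ℤ),
      (∀ (q : ℤ) (x : F (q + 1)), x ∈ F1 m₁ (q + 1) ⊓ F2 m₂ (q + 1) →
        dF (q + 1) x = 0 →
        ∃ y ∈ E1 m₁ (q + 1) ⊓ E2 m₂ (q + 1), dE (q + 1) y = 0 ∧
          ∃ z ∈ F1 m₁ q ⊓ F2 m₂ q, f (q + 1) y - x = dF q z) ∧
      (∀ (q : ℤ) (y : E (q + 1)), y ∈ E1 m₁ (q + 1) ⊓ E2 m₂ (q + 1) →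
        dE (q + 1) y = 0 →
        (∃ z ∈ F1 m₁ q ⊓ F2 m₂ q, f (q + 1) y = dF q z) →
        ∃ w ∈ E1 m₁ q ⊓ E2 m₂ q, y = dE q w)) ∧
    -- ... and on the underlying complexes
    ((∀ (q : ℤ) (x : F (q + 1)), dF (q + 1) x = 0 →
        ∃ y : E (q + 1), dE (q + 1) y = 0 ∧ ∃ z : F q, f (q + 1) y - x = dF q z) ∧
      (∀ (q : ℤ) (y : E (q + 1)), dE (q + 1) y = 0 →
        (∃ z : F q, f (q + 1) y = dF q z) →
        ∃ w : E q, y = dE q w)) := by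
  -- closure of the intersection subcomplexes under the differentials and f
  have hGEd : ∀ (k₁ k₂ q : ℤ) (x : E q), x ∈ E1 k₁ q ⊓ E2 k₂ q →
      dE q x ∈ E1 k₁ (q + 1) ⊓ E2 k₂ (q + 1) := by
    intro k₁ k₂ q x hx
    obtain ⟨h1, h2⟩ := Submodule.mem_inf.1 hx
    exact Submodule.mem_inf.2 ⟨hE1d k₁ q (Submodule.mem_map_of_mem h1),
      hE2d k₂ q (Submodule.mem_map_of_mem h2)⟩
  have hGFd : ∀ (k₁ k₂ q : ℤ) (x : F q), x ∈ F1 k₁ q ⊓ F2 k₂ q →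
      dF q x ∈ F1 k₁ (q + 1) ⊓ F2 k₂ (q + 1) := by
    intro k₁ k₂ q x hx
    obtain ⟨h1, h2⟩ := Submodule.mem_inf.1 hx
    exact Submodule.mem_inf.2 ⟨hF1d k₁ q (Submodule.mem_map_of_mem h1),
      hF2d k₂ q (Submodule.mem_map_of_mem h2)⟩
  have hfG : ∀ (k₁ k₂ q : ℤ) (x : E q), x ∈ E1 k₁ q ⊓ E2 k₂ q →
      f q x ∈ F1 k₁ q ⊓ F2 k₂ q := by
    intro k₁ k₂ q x hx
    obtain ⟨h1, h2⟩ := Submodule.mem_inf.1 hx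
    exact Submodule.mem_inf.2 ⟨hf1 k₁ q (Submodule.mem_map_of_mem h1),
      hf2 k₂ q (Submodule.mem_map_of_mem h2)⟩
  have hfMid : ∀ (k₁ k₂ q : ℤ) (x : E q),
      x ∈ (E1 (k₁ - 1) q ⊓ E2 k₂ q) ⊔ (E1 k₁ q ⊓ E2 (k₂ - 1) q) →
      f q x ∈ (F1 (k₁ - 1) q ⊓ F2 k₂ q) ⊔ (F1 k₁ q ⊓ F2 (k₂ - 1) q) := by
    intro k₁ k₂ q x hx
    obtain ⟨u, hu, v, hv, huv⟩ := Submodule.mem_sup.1 hx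
    rw [← huv, map_add]
    exact add_mem (Submodule.mem_sup_left (hfG _ _ _ _ hu))
      (Submodule.mem_sup_right (hfG _ _ _ _ hv))
  have hGle : ∀ (k₁ k₁' k₂ k₂' q : ℤ), k₁ ≤ k₁' → k₂ ≤ k₂' →
      E1 k₁ q ⊓ E2 k₂ q ≤ E1 k₁' q ⊓ E2 k₂' q := fun _ _ _ _ q h1 h2 =>
    inf_le_inf (hE1mono q h1) (hE2mono q h2)
  have hFle : ∀ (k₁ k₁' k₂ k₂' q : ℤ), k₁ ≤ k₁' → k₂ ≤ k₂' →
      F1 k₁ q ⊓ F2 k₂ q ≤ F1 k₁' q ⊓ F2 k₂' q := fun _ _ _ _ q h1 h2 =>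
    inf_le_inf (hF1mono q h1) (hF2mono q h2)
  have hMidleE : ∀ (k₁ k₂ q : ℤ),
      (E1 (k₁ - 1) q ⊓ E2 k₂ q) ⊔ (E1 k₁ q ⊓ E2 (k₂ - 1) q) ≤ E1 k₁ q ⊓ E2 k₂ q :=
    fun k₁ k₂ q => sup_le (hGle _ _ _ _ _ (by omega) le_rfl) (hGle _ _ _ _ _ le_rfl (by omega))
  have hMidleF : ∀ (k₁ k₂ q : ℤ),
      (F1 (k₁ - 1) q ⊓ F2 k₂ q) ⊔ (F1 k₁ q ⊓ F2 (k₂ - 1) q) ≤ F1 k₁ q ⊓ F2 k₂ q :=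
    fun k₁ k₂ q => sup_le (hFle _ _ _ _ _ (by omega) le_rfl) (hFle _ _ _ _ _ le_rfl (by omega))
  have hinfE : ∀ (k₁ k₂ q : ℤ), E1 (k₁ - 1) q ⊓ E2 (k₂ - 1) q =
      (E1 k₁ q ⊓ E2 (k₂ - 1) q) ⊓ (E1 (k₁ - 1) q ⊓ E2 k₂ q) := by
    intro k₁ k₂ q
    refine le_antisymm (le_inf (hGle _ _ _ _ _ (by omega) le_rfl)
      (hGle _ _ _ _ _ le_rfl (by omega))) ?_
    exact le_inf (inf_le_of_right_le inf_le_left) (inf_le_of_left_le inf_le_right)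
  have hinfF : ∀ (k₁ k₂ q : ℤ), F1 (k₁ - 1) q ⊓ F2 (k₂ - 1) q =
      (F1 k₁ q ⊓ F2 (k₂ - 1) q) ⊓ (F1 (k₁ - 1) q ⊓ F2 k₂ q) := by
    intro k₁ k₂ q
    refine le_antisymm (le_inf (hFle _ _ _ _ _ (by omega) le_rfl)
      (hFle _ _ _ _ _ le_rfl (by omega))) ?_
    exact le_inf (inf_le_of_right_le inf_le_left) (inf_le_of_left_le inf_le_right)
  -- Step A, injectivity: pairs (k₁, k₂) over (k₁ - 1, k₂)
  have stepAI : ∀ (k₁ q k₂ : ℤ), BInj dE dF f (fun q => E1 k₁ q ⊓ E2 k₂ q)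
      (fun q => E1 (k₁ - 1) q ⊓ E2 k₂ q) (fun q => F1 k₁ q ⊓ F2 k₂ q)
      (fun q => F1 (k₁ - 1) q ⊓ F2 k₂ q) q := by
    intro k₁ q
    obtain ⟨a, b, _, _, hE2a, _, _, _, _, _⟩ := hbireg (q + 1)
    have base : ∀ k₂ : ℤ, k₂ ≤ a → BInj dE dF f (fun q => E1 k₁ q ⊓ E2 k₂ q)
        (fun q => E1 (k₁ - 1) q ⊓ E2 k₂ q) (fun q => F1 k₁ q ⊓ F2 k₂ q)
        (fun q => F1 (k₁ - 1) q ⊓ F2 k₂ q) q := by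
      intro k₂ hk₂
      apply binj_of_bot
      show E1 k₁ (q + 1) ⊓ E2 k₂ (q + 1) = ⊥
      refine le_bot_iff.1 ?_
      rw [← hE2a]
      exact inf_le_of_right_le (hE2mono (q + 1) hk₂)
    have main : ∀ (n : ℕ) (k₂ : ℤ), k₂ ≤ a + n → BInj dE dF f (fun q => E1 k₁ q ⊓ E2 k₂ q)
        (fun q => E1 (k₁ - 1) q ⊓ E2 k₂ q) (fun q => F1 k₁ q ⊓ F2 k₂ q)
        (fun q => F1 (k₁ - 1) q ⊓ F2 k₂ q) q := by
      intro n
      induction n with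
      | zero => intro k₂ hk₂; exact base k₂ (by omega)
      | succ n ih =>
        intro k₂ hk₂
        by_cases hle : k₂ ≤ a + n
        · exact ih k₂ hle
        · have hBI : BInj dE dF f
              (fun q => (E1 (k₁ - 1) q ⊓ E2 k₂ q) ⊔ (E1 k₁ q ⊓ E2 (k₂ - 1) q))
              (fun q => E1 (k₁ - 1) q ⊓ E2 k₂ q)
              (fun q => (F1 (k₁ - 1) q ⊓ F2 k₂ q) ⊔ (F1 k₁ q ⊓ F2 (k₂ - 1) q))
              (fun q => F1 (k₁ - 1) q ⊓ F2 k₂ q) q :=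
            binj_excise (hinfE k₁ k₂) (fun _ => rfl) (hinfF k₁ k₂) (fun _ => rfl)
              (fun q' => hGEd k₁ (k₂ - 1) q') (fun q' => hGEd (k₁ - 1) k₂ q')
              (fun q' => hGFd k₁ (k₂ - 1) q') (fun q' => hGFd (k₁ - 1) k₂ q')
              (fun q' => hfG k₁ (k₂ - 1) q') (fun q' => hfG (k₁ - 1) k₂ q') q
              (ih (k₂ - 1) (by push_cast at hk₂ ⊢; omega))
          exact binj_glue hddE hddF hfcomm
            (G'E := fun q => (E1 (k₁ - 1) q ⊓ E2 k₂ q) ⊔ (E1 k₁ q ⊓ E2 (k₂ - 1) q))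
            (G'F := fun q => (F1 (k₁ - 1) q ⊓ F2 k₂ q) ⊔ (F1 k₁ q ⊓ F2 (k₂ - 1) q))
            (hMidleE k₁ k₂) (fun q' => le_sup_left) (fun q' => le_sup_left)
            (fun q' => hfG k₁ k₂ q') (fun q' => hfMid k₁ k₂ q')
            (q - 1) q (by ring) (hgrinj k₁ k₂ q) (hgrsurj k₁ k₂ (q - 1)) hBI
    intro k₂
    exact main (k₂ - a).toNat k₂ (by omega)
  -- Step A, surjectivity
  have stepAS : ∀ (k₁ q k₂ : ℤ), BSurj dE dF f (fun q => E1 k₁ q ⊓ E2 k₂ q)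
      (fun q => E1 (k₁ - 1) q ⊓ E2 k₂ q) (fun q => F1 k₁ q ⊓ F2 k₂ q)
      (fun q => F1 (k₁ - 1) q ⊓ F2 k₂ q) q := by
    intro k₁ q
    obtain ⟨a, b, _, _, _, _, _, _, hF2a, _⟩ := hbireg (q + 1)
    have base : ∀ k₂ : ℤ, k₂ ≤ a → BSurj dE dF f (fun q => E1 k₁ q ⊓ E2 k₂ q)
        (fun q => E1 (k₁ - 1) q ⊓ E2 k₂ q) (fun q => F1 k₁ q ⊓ F2 k₂ q)
        (fun q => F1 (k₁ - 1) q ⊓ F2 k₂ q) q := by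
      intro k₂ hk₂
      apply bsurj_of_bot
      show F1 k₁ (q + 1) ⊓ F2 k₂ (q + 1) = ⊥
      refine le_bot_iff.1 ?_
      rw [← hF2a]
      exact inf_le_of_right_le (hF2mono (q + 1) hk₂)
    have main : ∀ (n : ℕ) (k₂ : ℤ), k₂ ≤ a + n → BSurj dE dF f (fun q => E1 k₁ q ⊓ E2 k₂ q)
        (fun q => E1 (k₁ - 1) q ⊓ E2 k₂ q) (fun q => F1 k₁ q ⊓ F2 k₂ q)
        (fun q => F1 (k₁ - 1) q ⊓ F2 k₂ q) q := by
      intro n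
      induction n with
      | zero => intro k₂ hk₂; exact base k₂ (by omega)
      | succ n ih =>
        intro k₂ hk₂
        by_cases hle : k₂ ≤ a + n
        · exact ih k₂ hle
        · have hBI : BInj dE dF f
              (fun q => (E1 (k₁ - 1) q ⊓ E2 k₂ q) ⊔ (E1 k₁ q ⊓ E2 (k₂ - 1) q))
              (fun q => E1 (k₁ - 1) q ⊓ E2 k₂ q)
              (fun q => (F1 (k₁ - 1) q ⊓ F2 k₂ q) ⊔ (F1 k₁ q ⊓ F2 (k₂ - 1) q))
              (fun q => F1 (k₁ - 1) q ⊓ F2 k₂ q) (q + 1) :=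
            binj_excise (hinfE k₁ k₂) (fun _ => rfl) (hinfF k₁ k₂) (fun _ => rfl)
              (fun q' => hGEd k₁ (k₂ - 1) q') (fun q' => hGEd (k₁ - 1) k₂ q')
              (fun q' => hGFd k₁ (k₂ - 1) q') (fun q' => hGFd (k₁ - 1) k₂ q')
              (fun q' => hfG k₁ (k₂ - 1) q') (fun q' => hfG (k₁ - 1) k₂ q') (q + 1)
              (stepAI k₁ (q + 1) (k₂ - 1))
          have hBS : BSurj dE dF f
              (fun q => (E1 (k₁ - 1) q ⊓ E2 k₂ q) ⊔ (E1 k₁ q ⊓ E2 (k₂ - 1) q))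
              (fun q => E1 (k₁ - 1) q ⊓ E2 k₂ q)
              (fun q => (F1 (k₁ - 1) q ⊓ F2 k₂ q) ⊔ (F1 k₁ q ⊓ F2 (k₂ - 1) q))
              (fun q => F1 (k₁ - 1) q ⊓ F2 k₂ q) q :=
            bsurj_excise (hinfE k₁ k₂) (fun _ => rfl) (hinfF k₁ k₂) (fun _ => rfl)
              (fun q' => hGFd k₁ (k₂ - 1) q') (fun q' => hGFd (k₁ - 1) k₂ q') q
              (ih (k₂ - 1) (by push_cast at hk₂ ⊢; omega))
          exact bsurj_glue hddE hddF hfcomm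
            (G'E := fun q => (E1 (k₁ - 1) q ⊓ E2 k₂ q) ⊔ (E1 k₁ q ⊓ E2 (k₂ - 1) q))
            (G'F := fun q => (F1 (k₁ - 1) q ⊓ F2 k₂ q) ⊔ (F1 k₁ q ⊓ F2 (k₂ - 1) q))
            (hMidleE k₁ k₂) (hMidleF k₁ k₂) (fun q' => le_sup_left)
            (fun q' => hfMid k₁ k₂ q') (fun q' => hfG (k₁ - 1) k₂ q')
            q (hgrsurj k₁ k₂ q) hBI hBS
    intro k₂
    exact main (k₂ - a).toNat k₂ (by omega)
  -- Step B, injectivity: pairs (k₁, k₂) over ⊥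
  have stepBI : ∀ (k₂ q k₁ : ℤ), BInj dE dF f (fun q => E1 k₁ q ⊓ E2 k₂ q)
      (fun q => (⊥ : Submodule A (E q))) (fun q => F1 k₁ q ⊓ F2 k₂ q)
      (fun q => (⊥ : Submodule A (F q))) q := by
    intro k₂ q
    obtain ⟨a, b, hE1a, _, _, _, _, _, _, _⟩ := hbireg (q + 1)
    have base : ∀ k₁ : ℤ, k₁ ≤ a → BInj dE dF f (fun q => E1 k₁ q ⊓ E2 k₂ q)
        (fun q => (⊥ : Submodule A (E q))) (fun q => F1 k₁ q ⊓ F2 k₂ q)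
        (fun q => (⊥ : Submodule A (F q))) q := by
      intro k₁ hk₁
      apply binj_of_bot
      show E1 k₁ (q + 1) ⊓ E2 k₂ (q + 1) = ⊥
      refine le_bot_iff.1 ?_
      rw [← hE1a]
      exact inf_le_of_left_le (hE1mono (q + 1) hk₁)
    have main : ∀ (n : ℕ) (k₁ : ℤ), k₁ ≤ a + n → BInj dE dF f (fun q => E1 k₁ q ⊓ E2 k₂ q)
        (fun q => (⊥ : Submodule A (E q))) (fun q => F1 k₁ q ⊓ F2 k₂ q)
        (fun q => (⊥ : Submodule A (F q))) q := by
      intro n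
      induction n with
      | zero => intro k₁ hk₁; exact base k₁ (by omega)
      | succ n ih =>
        intro k₁ hk₁
        by_cases hle : k₁ ≤ a + n
        · exact ih k₁ hle
        · exact binj_glue hddE hddF hfcomm
            (G'E := fun q => E1 (k₁ - 1) q ⊓ E2 k₂ q)
            (G'F := fun q => F1 (k₁ - 1) q ⊓ F2 k₂ q)
            (fun q' => hGle _ _ _ _ _ (by omega) le_rfl) (fun q' => bot_le)
            (fun q' => bot_le) (fun q' => hfG k₁ k₂ q') (fun q' => hfG (k₁ - 1) k₂ q')
            (q - 1) q (by ring) (stepAI k₁ q k₂) (stepAS k₁ (q - 1) k₂)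
            (ih (k₁ - 1) (by push_cast at hk₁ ⊢; omega))
    intro k₁
    exact main (k₁ - a).toNat k₁ (by omega)
  -- Step B, surjectivity
  have stepBS : ∀ (k₂ q k₁ : ℤ), BSurj dE dF f (fun q => E1 k₁ q ⊓ E2 k₂ q)
      (fun q => (⊥ : Submodule A (E q))) (fun q => F1 k₁ q ⊓ F2 k₂ q)
      (fun q => (⊥ : Submodule A (F q))) q := by
    intro k₂ q
    obtain ⟨a, b, _, _, _, _, hF1a, _, _, _⟩ := hbireg (q + 1)
    have base : ∀ k₁ : ℤ, k₁ ≤ a → BSurj dE dF f (fun q => E1 k₁ q ⊓ E2 k₂ q)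
        (fun q => (⊥ : Submodule A (E q))) (fun q => F1 k₁ q ⊓ F2 k₂ q)
        (fun q => (⊥ : Submodule A (F q))) q := by
      intro k₁ hk₁
      apply bsurj_of_bot
      show F1 k₁ (q + 1) ⊓ F2 k₂ (q + 1) = ⊥
      refine le_bot_iff.1 ?_
      rw [← hF1a]
      exact inf_le_of_left_le (hF1mono (q + 1) hk₁)
    have main : ∀ (n : ℕ) (k₁ : ℤ), k₁ ≤ a + n → BSurj dE dF f (fun q => E1 k₁ q ⊓ E2 k₂ q)
        (fun q => (⊥ : Submodule A (E q))) (fun q => F1 k₁ q ⊓ F2 k₂ q)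
        (fun q => (⊥ : Submodule A (F q))) q := by
      intro n
      induction n with
      | zero => intro k₁ hk₁; exact base k₁ (by omega)
      | succ n ih =>
        intro k₁ hk₁
        by_cases hle : k₁ ≤ a + n
        · exact ih k₁ hle
        · exact bsurj_glue hddE hddF hfcomm
            (G'E := fun q => E1 (k₁ - 1) q ⊓ E2 k₂ q)
            (G'F := fun q => F1 (k₁ - 1) q ⊓ F2 k₂ q)
            (fun q' => hGle _ _ _ _ _ (by omega) le_rfl)
            (fun q' => hFle _ _ _ _ _ (by omega) le_rfl) (fun q' => bot_le)
            (fun q' => hfG (k₁ - 1) k₂ q')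
            (fun q' x hx => by rw [Submodule.mem_bot] at hx ⊢; rw [hx, map_zero])
            q (stepAS k₁ q k₂) (stepBI k₂ (q + 1) (k₁ - 1))
            (ih (k₁ - 1) (by push_cast at hk₁ ⊢; omega))
    intro k₁
    exact main (k₁ - a).toNat k₁ (by omega)
  refine ⟨fun m₁ m₂ => ⟨?_, ?_⟩, ?_, ?_⟩
  · -- quasi-isomorphism on intersections, surjectivity
    intro q x hx hdx
    obtain ⟨y, hy, hdy, z, hz, hcon⟩ := stepBS m₂ q m₁ x hx
      (by rw [Submodule.mem_bot]; exact hdx)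
    rw [Submodule.mem_bot] at hdy hcon
    exact ⟨y, hy, hdy, z, hz, sub_eq_zero.1 hcon⟩
  · -- quasi-isomorphism on intersections, injectivity
    intro q y hy hdy hex
    obtain ⟨z, hz, hfz⟩ := hex
    obtain ⟨w, hw, hcon⟩ := stepBI m₂ q m₁ y hy (by rw [Submodule.mem_bot]; exact hdy)
      ⟨z, hz, by rw [Submodule.mem_bot, hfz, sub_self]⟩
    rw [Submodule.mem_bot] at hcon
    exact ⟨w, hw, sub_eq_zero.1 hcon⟩
  · -- quasi-isomorphism on underlying complexes, surjectivity
    intro q x hdx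
    obtain ⟨a, b, _, _, _, _, _, hF1b, _, hF2b⟩ := hbireg (q + 1)
    obtain ⟨y, hy, hdy, z, hz, hcon⟩ := stepBS b q b x
      (Submodule.mem_inf.2 ⟨by rw [hF1b]; trivial, by rw [hF2b]; trivial⟩)
      (by rw [Submodule.mem_bot]; exact hdx)
    rw [Submodule.mem_bot] at hdy hcon
    exact ⟨y, hdy, z, sub_eq_zero.1 hcon⟩
  · -- quasi-isomorphism on underlying complexes, injectivity
    intro q y hdy hex
    obtain ⟨z, hfz⟩ := hex
    obtain ⟨a₁, b₁, _, hE1b, _, hE2b, _, _, _, _⟩ := hbireg (q + 1)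
    obtain ⟨a₀, b₀, _, _, _, _, _, hF1b, _, hF2b⟩ := hbireg q
    obtain ⟨w, hw, hcon⟩ := stepBI (max b₀ b₁) q (max b₀ b₁) y
      (Submodule.mem_inf.2 ⟨hE1mono (q + 1) (le_max_right b₀ b₁)
          (show y ∈ E1 b₁ (q + 1) by rw [hE1b]; trivial),
        hE2mono (q + 1) (le_max_right b₀ b₁)
          (show y ∈ E2 b₁ (q + 1) by rw [hE2b]; trivial)⟩)
      (by rw [Submodule.mem_bot]; exact hdy)
      ⟨z, Submodule.mem_inf.2 ⟨hF1mono q (le_max_left b₀ b₁)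
          (show z ∈ F1 b₀ q by rw [hF1b]; trivial),
        hF2mono q (le_max_left b₀ b₁)
          (show z ∈ F2 b₀ q by rw [hF2b]; trivial)⟩,
        by rw [Submodule.mem_bot, hfz, sub_self]⟩
    rw [Submodule.mem_bot] at hcon
    exact ⟨w, sub_eq_zero.1 hcon⟩
end

section
/- In the category of A-modules with n filtrations, suppose 0 → (I,{I^(i)}) → (J,{J^(i)}) → (K,{K^(i)}) → 0 is a short strictly exact sequence (i.e. 0 → I → J → K → 0 is exact, and for all intersections of filtration pieces the sequences 0 → I^{(i₁…iₙ)}_{k₁…kₙ} → J^{(i₁…iₙ)}_{k₁…kₙ} → K^{(i₁…iₙ)}_{k₁…kₙ} → 0 are exact) with (I,{I^(i)}) and (J,{J^(i)}) strictly injective. Then the inclusion I ↪ J splits as a morphism of n-filtered modules, J ≅ I ⊕ K as n-filtered modules, and (K,{K^(i)}) is strictly injective. -/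
universe u

/-- An `n`-filtered module `(J, {J^(i)})` is strictly injective if `J` and all
intersections of filtration pieces are injective `A`-modules and for every
strict injective morphism of `n`-filtered modules the restriction map on
filtered Hom is a strict epimorphism. -/
def IsStrictlyInjective (A : Type u) [CommRing A] (n : ℕ) (J : Type u)
    [AddCommGroup J] [Module A J] (JF : Fin n → ℤ → Submodule A J) : Prop :=
  Module.Injective A J ∧
  (∀ (ii : Fin n → Fin n) (kk : Fin n → ℤ),
    Module.Injective A ↥(⨅ j, JF (ii j) (kk j))) ∧
  ∀ (M N : Type u) [AddCommGroup M] [Module A M] [AddCommGroup N] [Module A N]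
    (MF : Fin n → ℤ → Submodule A M) (NF : Fin n → ℤ → Submodule A N),
    (∀ i, Monotone (MF i)) → (∀ i, Monotone (NF i)) →
    ∀ (u : M →ₗ[A] N), Function.Injective u →
    (∀ i k, (MF i k).map u ≤ NF i k) →
    (∀ (ii : Fin n → Fin n) (kk : Fin n → ℤ),
      LinearMap.range u ⊓ (⨅ j, NF (ii j) (kk j)) = (⨅ j, MF (ii j) (kk j)).map u) →
    (∀ g : M →ₗ[A] J, ∃ h : N →ₗ[A] J, h.comp u = g) ∧
    (∀ (c : Fin n → ℤ) (g : M →ₗ[A] J),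
      (∀ i l, (MF i l).map g ≤ JF i (l + c i)) →
      ∃ h : N →ₗ[A] J, (∀ i l, (NF i l).map h ≤ JF i (l + c i)) ∧ h.comp u = g)

/-- A retract of an injective module is injective. -/
lemma retract_inj {A M N : Type u} [CommRing A] [AddCommGroup M] [Module A M]
    [AddCommGroup N] [Module A N] (hM : Module.Injective A M)
    (s : N →ₗ[A] M) (p : M →ₗ[A] N) (hps : ∀ x, p (s x) = x) :
    Module.Injective A N := by
  constructor
  intro X Y _ _ _ _ f hf g
  obtain ⟨h, hh⟩ := hM.out f hf (s.comp g)
  refine ⟨p.comp h, fun x => ?_⟩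
  simp only [LinearMap.comp_apply] at hh ⊢
  rw [hh x, hps]

/-- Proposition 8.1 (condition (8.0.2) for strictly injectives): in a short
strictly exact sequence `0 → I → J → K → 0` of `n`-filtered modules with `I`
and `J` strictly injective, the inclusion `I ↪ J` splits as a morphism of
`n`-filtered modules, `J ≅ I ⊕ K` as `n`-filtered modules, and `K` is strictly
injective. -/
theorem stmt16 {A : Type u} [CommRing A] {I J K : Type u}
    [AddCommGroup I] [Module A I] [AddCommGroup J] [Module A J]
    [AddCommGroup K] [Module A K] (n : ℕ)
    (IF : Fin n → ℤ → Submodule A I) (JF : Fin n → ℤ → Submodule A J)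
    (KF : Fin n → ℤ → Submodule A K)
    (hIm : ∀ i, Monotone (IF i)) (hJm : ∀ i, Monotone (JF i))
    (hKm : ∀ i, Monotone (KF i))
    (α : I →ₗ[A] J) (β : J →ₗ[A] K)
    (hαinj : Function.Injective α) (hβsurj : Function.Surjective β)
    (hexact : LinearMap.range α = LinearMap.ker β)
    (hαfil : ∀ i k, (IF i k).map α ≤ JF i k)
    (hβfil : ∀ i k, (JF i k).map β ≤ KF i k)
    -- strict exactness on all intersections of filtration pieces
    (hstrexact : ∀ (ii : Fin n → Fin n) (kk : Fin n → ℤ),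
      (⨅ j, IF (ii j) (kk j)).map α = LinearMap.ker β ⊓ (⨅ j, JF (ii j) (kk j)) ∧
      (⨅ j, JF (ii j) (kk j)).map β = ⨅ j, KF (ii j) (kk j))
    (hI : IsStrictlyInjective A n I IF) (hJ : IsStrictlyInjective A n J JF) :
    -- the inclusion splits by a filtered retraction
    (∃ r : J →ₗ[A] I, r.comp α = LinearMap.id ∧ ∀ i k, (JF i k).map r ≤ IF i k) ∧
    -- J ≅ I ⊕ K as n-filtered modules
    (∃ e : J ≃ₗ[A] I × K,
      e.toLinearMap.comp α = LinearMap.inl A I K ∧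
      (LinearMap.snd A I K).comp e.toLinearMap = β ∧
      ∀ (ii : Fin n → Fin n) (kk : Fin n → ℤ),
        (⨅ j, JF (ii j) (kk j)).map e.toLinearMap =
          (⨅ j, IF (ii j) (kk j)).prod (⨅ j, KF (ii j) (kk j))) ∧
    -- K is strictly injective
    IsStrictlyInjective A n K KF := by
  have hβα : ∀ x, β (α x) = 0 := fun x => by
    have hx : α x ∈ LinearMap.ker β := hexact ▸ LinearMap.mem_range_self α x
    exact hx
  -- the filtered retraction
  obtain ⟨r, hrfil, hrα⟩ : ∃ r : J →ₗ[A] I,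
      (∀ i k, (JF i k).map r ≤ IF i k) ∧ r.comp α = LinearMap.id := by
    have hstrict : ∀ (ii : Fin n → Fin n) (kk : Fin n → ℤ),
        LinearMap.range α ⊓ (⨅ j, JF (ii j) (kk j)) = (⨅ j, IF (ii j) (kk j)).map α := by
      intro ii kk
      rw [hexact]
      exact ((hstrexact ii kk).1).symm
    obtain ⟨-, h2⟩ := hI.2.2 I J IF JF hIm hJm α hαinj hαfil hstrict
    obtain ⟨r, hr1, hr2⟩ := h2 (fun _ => 0) LinearMap.id
      (fun i l => by simpa using le_refl (IF i l))
    exact ⟨r, fun i k => by simpa using hr1 i k, hr2⟩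
  have hrα' : ∀ x, r (α x) = x := fun x => LinearMap.congr_fun hrα x
  set f : J →ₗ[A] I × K := r.prod β with hfdef
  have hfapp : ∀ j, f j = (r j, β j) := fun j => rfl
  have hfinj : Function.Injective f := by
    intro a b hab
    have h1 : r a = r b := congrArg Prod.fst hab
    have h2 : β a = β b := congrArg Prod.snd hab
    have hmem : a - b ∈ LinearMap.ker β := by
      simp [LinearMap.mem_ker, map_sub, h2]
    rw [← hexact] at hmem
    obtain ⟨x, hx⟩ := hmem
    have hx0 : x = 0 := by
      have h3 : r (α x) = x := hrα' x
      rw [hx, map_sub, h1, sub_self] at h3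
      exact h3.symm
    rw [hx0, map_zero] at hx
    exact sub_eq_zero.mp hx.symm
  have hfval : ∀ (x : I) (j0 : J), f (α (x - r j0) + j0) = (x, β j0) := by
    intro x j0
    have : f (α (x - r j0) + j0) = (r (α (x - r j0)) + r j0, β (α (x - r j0)) + β j0) := by
      rw [hfapp]; simp [map_add]
    rw [this, hrα', hβα, zero_add, sub_add_cancel]
  have hfsurj : Function.Surjective f := by
    rintro ⟨x, k⟩
    obtain ⟨j0, hj0⟩ := hβsurj k
    exact ⟨α (x - r j0) + j0, by rw [hfval, hj0]⟩
  set e : J ≃ₗ[A] I × K := LinearEquiv.ofBijective f ⟨hfinj, hfsurj⟩ with hedef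
  have heapp : ∀ j, e j = f j := fun j => rfl
  have hecoe : e.toLinearMap = f := rfl
  -- membership of r on intersections
  have hrinf : ∀ (ii : Fin n → Fin n) (kk : Fin n → ℤ) (j : J),
      j ∈ (⨅ j', JF (ii j') (kk j')) → r j ∈ ⨅ j', IF (ii j') (kk j') := by
    intro ii kk j hj
    rw [Submodule.mem_iInf] at hj ⊢
    exact fun j' => hrfil _ _ ⟨j, hj j', rfl⟩
  -- the filtration computation for e
  have hefil : ∀ (ii : Fin n → Fin n) (kk : Fin n → ℤ),
      (⨅ j, JF (ii j) (kk j)).map f =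
        (⨅ j, IF (ii j) (kk j)).prod (⨅ j, KF (ii j) (kk j)) := by
    intro ii kk
    apply le_antisymm
    · rintro _ ⟨j, hj, rfl⟩
      rw [hfapp]
      refine ⟨hrinf ii kk j hj, ?_⟩
      rw [← (hstrexact ii kk).2]
      exact ⟨j, hj, rfl⟩
    · rintro ⟨x, k⟩ hxk
      obtain ⟨hx, hk⟩ := Submodule.mem_prod.mp hxk
      rw [← (hstrexact ii kk).2] at hk
      obtain ⟨j0, hj0, hj0k⟩ := hk
      have hxr : x - r j0 ∈ ⨅ j, IF (ii j) (kk j) := sub_mem hx (hrinf ii kk j0 hj0)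
      have hαm : α (x - r j0) ∈ ⨅ j, JF (ii j) (kk j) := by
        have hm : α (x - r j0) ∈ (⨅ j, IF (ii j) (kk j)).map α := ⟨_, hxr, rfl⟩
        rw [(hstrexact ii kk).1] at hm
        exact hm.2
      exact ⟨α (x - r j0) + j0, add_mem hαm hj0, by rw [hfval, hj0k]⟩
  -- the section s of β
  set s : K →ₗ[A] J := e.symm.toLinearMap.comp (LinearMap.inr A I K) with hsdef
  have hfs : ∀ k, f (s k) = (0, k) := fun k => e.apply_symm_apply (0, k)
  have hβs : ∀ k, β (s k) = k := fun k => congrArg Prod.snd (hfs k)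
  have hsfil : ∀ (ii : Fin n → Fin n) (kk : Fin n → ℤ) (k : K),
      k ∈ (⨅ j, KF (ii j) (kk j)) → s k ∈ ⨅ j, JF (ii j) (kk j) := by
    intro ii kk k hk
    have hmem : ((0 : I), k) ∈ (⨅ j, IF (ii j) (kk j)).prod (⨅ j, KF (ii j) (kk j)) :=
      ⟨Submodule.zero_mem _, hk⟩
    rw [← hefil ii kk] at hmem
    obtain ⟨j, hj, hjf⟩ := hmem
    have hsk : s k = j := by
      show e.symm (0, k) = j
      rw [← hjf]
      exact e.symm_apply_apply j
    rw [hsk]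
    exact hj
  have hsfil1 : ∀ (i : Fin n) (l : ℤ) (x : K), x ∈ KF i l → s x ∈ JF i l := by
    intro i l x hx
    have h1 : x ∈ ⨅ j : Fin n, KF i l := Submodule.mem_iInf _ |>.mpr fun _ => hx
    have h2 := hsfil (fun _ => i) (fun _ => l) x h1
    exact Submodule.mem_iInf _ |>.mp h2 i
  refine ⟨⟨r, hrα, hrfil⟩, ⟨e, ?_, ?_, ?_⟩, ?_, ?_, ?_⟩
  · -- e ∘ α = inl
    apply LinearMap.ext
    intro x
    show f (α x) = (x, (0 : K))
    rw [hfapp, hrα', hβα]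
  · -- snd ∘ e = β
    apply LinearMap.ext
    intro j
    rfl
  · -- filtration property
    intro ii kk
    rw [hecoe]
    exact hefil ii kk
  · -- K injective
    exact retract_inj hJ.1 s β hβs
  · -- intersections injective
    intro ii kk
    have hβres : ∀ j ∈ (⨅ j', JF (ii j') (kk j')), β j ∈ ⨅ j', KF (ii j') (kk j') := by
      intro j hj
      rw [← (hstrexact ii kk).2]
      exact ⟨j, hj, rfl⟩
    refine retract_inj (hJ.2.1 ii kk) (s.restrict (fun k hk => hsfil ii kk k hk))
      (β.restrict hβres) (fun x => ?_)
    exact Subtype.ext (hβs x.1)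
  · -- lifting property
    intro M N _ _ _ _ MF NF hMm hNm u hu hufil hustrict
    obtain ⟨hJ1, hJ2⟩ := hJ.2.2 M N MF NF hMm hNm u hu hufil hustrict
    constructor
    · intro g
      obtain ⟨h, hh⟩ := hJ1 (s.comp g)
      refine ⟨β.comp h, ?_⟩
      rw [LinearMap.comp_assoc, hh, ← LinearMap.comp_assoc]
      apply LinearMap.ext
      intro x
      exact hβs (g x)
    · intro c g hg
      have hg' : ∀ i l, (MF i l).map (s.comp g) ≤ JF i (l + c i) := by
        intro i l
        rintro _ ⟨m, hm, rfl⟩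
        exact hsfil1 i _ _ (hg i l ⟨m, hm, rfl⟩)
      obtain ⟨h, hh1, hh2⟩ := hJ2 c (s.comp g) hg'
      refine ⟨β.comp h, ?_, ?_⟩
      · intro i l
        rintro _ ⟨m, hm, rfl⟩
        exact hβfil i _ ⟨h m, hh1 i l ⟨m, hm, rfl⟩, rfl⟩
      · rw [LinearMap.comp_assoc, hh2, ← LinearMap.comp_assoc]
        apply LinearMap.ext
        intro x
        exact hβs (g x)
end

section
/- Let A be a commutative ring and let 0 ⊊ N ⊊ M be A-modules. Define on E := M ⊕ M the filtration E^(1) with E^(1)_k = 0 for k < 0, = N ⊕ 0 for k = 0, = E for k > 0, and similarly E^(2) with 0 ⊕ N in degree 0; define on F := M the filtration P with P_k = 0 (k<0), N (k=0), M (k>0), and set F^(1) = F^(2) = P. Let f : E → F be the sum map. Then the coimage of f with the quotient bifiltration equals the image of f with the induced bifiltration; explicitly, for all k and i = 1,2: f(E^(i)_k) + Ker(f) pushed to f(E) = F equals f(E) ∩ F^(i)_k, yet f(E^(1)_0 ∩ E^(2)_0) = 0 while f(E) ∩ F^(1)_0 ∩ F^(2)_0 = N. -/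
/-- Remark 2.3 in detail: for `0 ⊊ N ⊊ M`, the summation map
`f : E = M ⊕ M → F = M` with the indicated bifiltrations satisfies
`Coim(f) = Im(f)` as bifiltered modules (`f(E^(i)_k) = f(E) ∩ F^(i)_k` for
`i = 1, 2` and all `k`), yet `f(E^(1)_0 ∩ E^(2)_0) = 0` while
`f(E) ∩ F^(1)_0 ∩ F^(2)_0 = N`, so `f` is not intersection-strict. -/
theorem stmt18 {A M : Type*} [CommRing A] [AddCommGroup M] [Module A M]
    (N : Submodule A M) (hNbot : N ≠ ⊥) (hNtop : N ≠ ⊤)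
    (E1 E2 : ℤ → Submodule A (M × M)) (Ffil : ℤ → Submodule A M)
    (hE1 : ∀ k, E1 k = if k < 0 then ⊥ else if k = 0 then N.prod ⊥ else ⊤)
    (hE2 : ∀ k, E2 k = if k < 0 then ⊥ else if k = 0 then (⊥ : Submodule A M).prod N else ⊤)
    (hF : ∀ k, Ffil k = if k < 0 then ⊥ else if k = 0 then N else ⊤)
    (f : (M × M) →ₗ[A] M) (hf : f = LinearMap.fst A M M + LinearMap.snd A M M) :
    (∀ k, (E1 k).map f = LinearMap.range f ⊓ Ffil k) ∧
    (∀ k, (E2 k).map f = LinearMap.range f ⊓ Ffil k) ∧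
    (E1 0 ⊓ E2 0).map f = ⊥ ∧
    LinearMap.range f ⊓ (Ffil 0 ⊓ Ffil 0) = N ∧
    (E1 0 ⊓ E2 0).map f ≠ LinearMap.range f ⊓ (Ffil 0 ⊓ Ffil 0) := by
  have hfval : ∀ p : M × M, f p = p.1 + p.2 := by
    intro p; rw [hf]; rfl
  have hrange : LinearMap.range f = ⊤ := by
    rw [eq_top_iff]
    rintro x -
    exact ⟨(x, 0), by simp [hfval]⟩
  have hmapN1 : (N.prod (⊥ : Submodule A M)).map f = N := by
    apply le_antisymm
    · rintro _ ⟨⟨a, b⟩, ⟨ha, hb⟩, rfl⟩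
      simp only [SetLike.mem_coe, Submodule.mem_bot] at hb
      simpa [hfval, hb] using ha
    · intro n hn
      exact ⟨(n, 0), ⟨hn, rfl⟩, by simp [hfval]⟩
  have hmapN2 : ((⊥ : Submodule A M).prod N).map f = N := by
    apply le_antisymm
    · rintro _ ⟨⟨a, b⟩, ⟨ha, hb⟩, rfl⟩
      simp only [SetLike.mem_coe, Submodule.mem_bot] at ha
      simpa [hfval, ha] using hb
    · intro n hn
      exact ⟨(0, n), ⟨rfl, hn⟩, by simp [hfval]⟩
  have hmaptop : (⊤ : Submodule A (M × M)).map f = ⊤ := by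
    rw [Submodule.map_top, hrange]
  have key : ∀ k : ℤ, (if k < 0 then (⊥ : Submodule A (M × M)) else
      if k = 0 then N.prod ⊥ else ⊤).map f = LinearMap.range f ⊓ Ffil k := by
    intro k
    rw [hF k, hrange, top_inf_eq]
    split_ifs with h1 h2
    · simp
    · exact hmapN1
    · exact hmaptop
  have key2 : ∀ k : ℤ, (if k < 0 then (⊥ : Submodule A (M × M)) else
      if k = 0 then (⊥ : Submodule A M).prod N else ⊤).map f = LinearMap.range f ⊓ Ffil k := by
    intro k
    rw [hF k, hrange, top_inf_eq]
    split_ifs with h1 h2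
    · simp
    · exact hmapN2
    · exact hmaptop
  have hinter : E1 0 ⊓ E2 0 = ⊥ := by
    rw [hE1 0, hE2 0]
    simp only [lt_irrefl, if_false, if_pos rfl]
    apply le_bot_iff.mp
    rintro ⟨a, b⟩ ⟨⟨_, hb⟩, ⟨ha, _⟩⟩
    simp only [Submodule.mem_bot] at ha hb ⊢
    exact Prod.ext ha hb
  refine ⟨fun k => by rw [hE1 k]; exact key k,
    fun k => by rw [hE2 k]; exact key2 k,
    by rw [hinter]; simp,
    by rw [hrange, hF 0]; simp,
    ?_⟩
  rw [hinter, hrange, hF 0]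
  simp only [lt_irrefl, if_false, if_pos rfl, inf_idem, top_inf_eq, Submodule.map_bot]
  exact fun h => hNbot h.symm
end

section
/- Let f : E^• → J^• be a degreewise injective morphism of cochain complexes of A-modules with n filtrations such that for each q, i, k: Ker(J^{q,(i)}_k → J^{q,(i)}_k ⊕_{E^{q,(i)}_k} E^{q+1,(i)}_k ) computes the kernel of the differential composed with the pushout map, and f^q is a degreewise strict injection. If additionally for each q and each pair of indices (i₁,k₁),(i₂,k₂), every element of ⋂_{l} Ker(J^{q,(i_l)}_{k_l} → J^{q,(i_l)}_{k_l} ⊕_{E^{q,(i_l)}_{k_l}} E^{q+1,(i_l)}_{k_l}) lifts (via the injective map f^q) to a single element of E^{q,(i₁)}_{k₁} ∩ E^{q,(i₂)}_{k₂} killed by d, then the kernel of the composite on intersections satisfies Ker(J^{q,(i₁i₂)}_{k₁k₂} → J^{q+1,(i₁i₂)}_{k₁k₂}) = Ker(J^{q,(i₁i₂)}_{k₁k₂} → J^{q,(i₁i₂)}_{k₁k₂} ⊕_{E^{q,(i₁i₂)}_{k₁k₂}} E^{q+1,(i₁i₂)}_{k₁k₂}). -/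
/-- Formula (3.8.5) from the construction of specially injective resolutions.
The kernel of `J^{q,(i)}_k → J^{q,(i)}_k ⊕_{E^{q,(i)}_k} E^{q+1,(i)}_k` (the
pushout being the cokernel of `e ↦ (f e, -d e)`) is the image under the
injective map `f` of the cocycles of `E` in the corresponding filtration piece.
If for each single index this kernel agrees with the kernel of the differential
of `J` restricted to the piece, and elements of the intersection of the two
per-index kernels lift via `f` to a single cocycle in the intersection of the
filtration pieces of `E`, then the same identification holds on intersections:
`Ker(J^{q,(i₁i₂)}_{k₁k₂} → J^{q+1,(i₁i₂)}_{k₁k₂})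
  = Ker(J^{q,(i₁i₂)}_{k₁k₂} → J^{q,(i₁i₂)}_{k₁k₂} ⊕_{E^{q,(i₁i₂)}_{k₁k₂}} E^{q+1,(i₁i₂)}_{k₁k₂})
  = f((E^{(i₁)}_{k₁} ∩ E^{(i₂)}_{k₂}) ∩ Ker d)`. -/
theorem stmt19 {A : Type*} [CommRing A] {E E' J J' : Type*}
    [AddCommGroup E] [Module A E] [AddCommGroup E'] [Module A E']
    [AddCommGroup J] [Module A J] [AddCommGroup J'] [Module A J'] (n : ℕ)
    (EF : Fin n → ℤ → Submodule A E) (EF' : Fin n → ℤ → Submodule A E')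
    (JF : Fin n → ℤ → Submodule A J) (JF' : Fin n → ℤ → Submodule A J')
    (hEm : ∀ i, Monotone (EF i)) (hJm : ∀ i, Monotone (JF i))
    (dE : E →ₗ[A] E') (dJ : J →ₗ[A] J')
    (f : E →ₗ[A] J) (hf : Function.Injective f)
    (f' : E' →ₗ[A] J') (hf' : Function.Injective f')
    (hcomm : dJ.comp f = f'.comp dE)
    (hffil : ∀ i k, (EF i k).map f ≤ JF i k)
    (hdEfil : ∀ i k, (EF i k).map dE ≤ EF' i k)
    (hdJfil : ∀ i k, (JF i k).map dJ ≤ JF' i k)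
    -- per-index identification of the kernel of the map to the pushout
    (hker : ∀ (i : Fin n) (k : ℤ),
      JF i k ⊓ LinearMap.ker dJ = (EF i k ⊓ LinearMap.ker dE).map f)
    (i₁ i₂ : Fin n) (k₁ k₂ : ℤ)
    -- elements of the intersection of the two per-index kernels lift via the
    -- injective map f to a single cocycle in the intersection
    (hlift : ∀ j : J,
      j ∈ ((EF i₁ k₁ ⊓ LinearMap.ker dE).map f) ⊓
        ((EF i₂ k₂ ⊓ LinearMap.ker dE).map f) →
      ∃ e : E, e ∈ (EF i₁ k₁ ⊓ EF i₂ k₂) ⊓ LinearMap.ker dE ∧ f e = j) :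
    (JF i₁ k₁ ⊓ JF i₂ k₂) ⊓ LinearMap.ker dJ =
      ((EF i₁ k₁ ⊓ EF i₂ k₂) ⊓ LinearMap.ker dE).map f := by
  apply le_antisymm
  · rintro j ⟨⟨h1, h2⟩, hd⟩
    obtain ⟨e, he, rfl⟩ := hlift j ⟨(hker i₁ k₁) ▸ ⟨h1, hd⟩, (hker i₂ k₂) ▸ ⟨h2, hd⟩⟩
    exact ⟨e, he, rfl⟩
  · rintro _ ⟨e, ⟨⟨h1, h2⟩, hd⟩, rfl⟩
    refine ⟨⟨hffil i₁ k₁ ⟨e, h1, rfl⟩, hffil i₂ k₂ ⟨e, h2, rfl⟩⟩, ?_⟩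
    have : dJ (f e) = f' (dE e) := LinearMap.congr_fun hcomm e
    simp [LinearMap.mem_ker, this, LinearMap.mem_ker.mp hd]
end
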